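/- arXiv:1610.06341 — 8 statements merged into one kernel-verified Lean document; each statement's English description precedes it below -/
import Mathlib

section
/- The map δ_P : [0,∞] × 𝒫([0,∞]) → [0,∞] defined by δ_P(x,A) = x ⊖ sup A for nonempty A and δ_P(x,∅) = ∞ is an approach distance, i.e., it satisfies (A1) δ_P(x,{x})=0, (A2) δ_P(x,∅)=∞, (A3) δ_P(x, A∪B)=min(δ_P(x,A), δ_P(x,B)), and (A4) δ_P(x,A) ≤ δ_P(x,B) + sup_{b∈B} δ_P(b,A). -/
open ENNReal

universe u

structure GMetric (X : Type u) where
  d : X → X → ℝ≥0∞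
  refl : ∀ x, d x x = 0
  triangle : ∀ x y z, d x z ≤ d x y + d y z

variable {X : Type u}

/-- Weight of a generalized metric space. -/
def IsWeight (m : GMetric X) (φ : X → ℝ≥0∞) : Prop := ∀ x y, φ x ≤ φ y + m.d x y

/-- Coweight of a generalized metric space. -/
def IsCoweight (m : GMetric X) (ψ : X → ℝ≥0∞) : Prop := ∀ x y, ψ y ≤ ψ x + m.d x y

/-- The metric on weights: d̄(φ,ψ) = sup_x (ψ x ⊖ φ x). -/
noncomputable def dbar (φ ψ : X → ℝ≥0∞) : ℝ≥0∞ := ⨆ x, ψ x - φ x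

/-- A directed index: nonempty, preordered and directed. -/
def DirIdx {ι : Type*} (le : ι → ι → Prop) : Prop :=
  Nonempty ι ∧ Reflexive le ∧ Transitive le ∧ ∀ i j, ∃ k, le i k ∧ le j k

/-- Forward Cauchy net. -/
def ForwardCauchy {ι : Type*} (m : GMetric X) (le : ι → ι → Prop) (x : ι → X) : Prop :=
  DirIdx le ∧ (⨅ i, ⨆ j, ⨆ (_ : le i j), ⨆ k, ⨆ (_ : le j k), m.d (x j) (x k)) = 0

/-- Yoneda limit of a net. -/
def YonedaLimit {ι : Type*} (m : GMetric X) (le : ι → ι → Prop) (x : ι → X) (a : X) : Prop :=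
  ∀ y, m.d a y = ⨅ i, ⨆ j, ⨆ (_ : le i j), m.d (x j) y

/-- Scott weight. -/
def ScottWeight (m : GMetric X) (φ : X → ℝ≥0∞) : Prop :=
  IsWeight m φ ∧ ∀ (ι : Type u) (le : ι → ι → Prop) (x : ι → X) (a : X),
    ForwardCauchy m le x → YonedaLimit m le x a →
    φ a ≤ ⨅ i, ⨆ j, ⨆ (_ : le i j), φ (x j)

/-- The Scott approach distance. -/
noncomputable def scottDist (m : GMetric X) (x : X) (A : Set X) : ℝ≥0∞ :=
  ⨆ (φ : X → ℝ≥0∞) (_ : ScottWeight m φ ∧ ∀ a ∈ A, φ a = 0), φ x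

/-- Tensor product of a weight and a coweight. -/
noncomputable def tensor (φ ψ : X → ℝ≥0∞) : ℝ≥0∞ := ⨅ x, φ x + ψ x

/-- Flat weight. -/
def FlatWeight (m : GMetric X) (φ : X → ℝ≥0∞) : Prop :=
  IsWeight m φ ∧ (⨅ x, φ x) = 0 ∧
  ∀ ψ₁ ψ₂, IsCoweight m ψ₁ → IsCoweight m ψ₂ →
    tensor φ (fun x => max (ψ₁ x) (ψ₂ x)) = max (tensor φ ψ₁) (tensor φ ψ₂)

/-- Colimit of a weight. -/
def IsColimit (m : GMetric X) (φ : X → ℝ≥0∞) (a : X) : Prop :=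
  ∀ y, dbar φ (fun z => m.d z y) = m.d a y

/-- Compact element. -/
def IsCompactElem (m : GMetric X) (a : X) : Prop :=
  ∀ (ι : Type u) (le : ι → ι → Prop) (x : ι → X) (b : X),
    ForwardCauchy m le x → YonedaLimit m le x b →
    m.d a b = ⨅ i, ⨆ j, ⨆ (_ : le i j), m.d a (x j)

/-- Approach space axioms. -/
def A1 (δ : X → Set X → ℝ≥0∞) : Prop := ∀ x, δ x {x} = 0
def A2 (δ : X → Set X → ℝ≥0∞) : Prop := ∀ x, δ x (∅ : Set X) = ∞
def A3 (δ : X → Set X → ℝ≥0∞) : Prop := ∀ x A B, δ x (A ∪ B) = min (δ x A) (δ x B)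
def A4 (δ : X → Set X → ℝ≥0∞) : Prop := ∀ x A B, δ x A ≤ δ x B + ⨆ b ∈ B, δ b A

/-- Regular function of an approach space. -/
def IsRegularFn (δ : X → Set X → ℝ≥0∞) (φ : X → ℝ≥0∞) : Prop :=
  ∀ x A, φ x - (⨆ a ∈ A, φ a) ≤ δ x A

/-- The Lawvere metric d_L(a,b) = b ⊖ a on [0,∞]. -/
noncomputable def dL : GMetric ℝ≥0∞ where
  d a b := b - a
  refl x := tsub_self x
  triangle x y z := by
    calc z - x ≤ z - y + (y - x) := tsub_le_tsub_add_tsub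
    _ = (y - x) + (z - y) := add_comm _ _

/-- The opposite Lawvere metric d_R(a,b) = a ⊖ b on [0,∞]. -/
noncomputable def dR : GMetric ℝ≥0∞ where
  d a b := a - b
  refl x := tsub_self x
  triangle _ _ _ := tsub_le_tsub_add_tsub

/-- Order on formal balls. -/
def ballLE (m : GMetric X) (p q : X × ℝ≥0∞) : Prop := q.2 + m.d p.1 q.1 ≤ p.2

open Classical in
/-- δ_P(x,A) = x ⊖ sup A for nonempty A, ∞ for A = ∅. -/
noncomputable def deltaP : ℝ≥0∞ → Set ℝ≥0∞ → ℝ≥0∞ :=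
  fun x A => if A.Nonempty then x - sSup A else ∞

/-! With `a = sup A` and `b = sup B`, axiom (A4) for nonempty `A`, `B` is the truncated triangle
inequality `x ⊖ a ≤ (x ⊖ b) + (b ⊖ a)`, because `sup_{y ∈ B} (y ⊖ a) = b ⊖ a` (truncated
subtraction of a constant commutes with suprema in `[0,∞]`). Axiom (A3) holds because
`x ⊖ ·` is antitone, so it turns `sup (A ∪ B) = max (sup A) (sup B)` into a minimum. -/

section deltaP

variable {x : ℝ≥0∞} {A B : Set ℝ≥0∞}

lemma deltaP_of_nonempty (hA : A.Nonempty) : deltaP x A = x - sSup A := if_pos hA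

@[simp]
lemma deltaP_empty (x : ℝ≥0∞) : deltaP x ∅ = ∞ := if_neg Set.not_nonempty_empty

lemma sSup_tsub (B : Set ℝ≥0∞) (c : ℝ≥0∞) : sSup B - c = ⨆ b ∈ B, b - c := by
  rw [sSup_eq_iSup', ENNReal.iSup_sub, iSup_subtype']

lemma biSup_deltaP_of_nonempty (hA : A.Nonempty) :
    ⨆ b ∈ B, deltaP b A = sSup B - sSup A := by
  simp only [deltaP_of_nonempty hA, sSup_tsub]

lemma deltaP_union (x : ℝ≥0∞) (A B : Set ℝ≥0∞) :
    deltaP x (A ∪ B) = min (deltaP x A) (deltaP x B) := by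
  rcases A.eq_empty_or_nonempty with rfl | hA
  · simp
  rcases B.eq_empty_or_nonempty with rfl | hB
  · simp
  rw [deltaP_of_nonempty hA.inl, deltaP_of_nonempty hA, deltaP_of_nonempty hB, sSup_union]
  exact antitone_const_tsub.map_max

lemma deltaP_le_add_biSup (x : ℝ≥0∞) (A B : Set ℝ≥0∞) :
    deltaP x A ≤ deltaP x B + ⨆ b ∈ B, deltaP b A := by
  rcases B.eq_empty_or_nonempty with rfl | hB
  · simp
  rcases A.eq_empty_or_nonempty with rfl | hA
  · simp [biSup_const hB]
  calc deltaP x A = x - sSup A := deltaP_of_nonempty hA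
    _ ≤ (x - sSup B) + (sSup B - sSup A) := tsub_le_tsub_add_tsub
    _ = deltaP x B + ⨆ b ∈ B, deltaP b A := by
      rw [deltaP_of_nonempty hB, biSup_deltaP_of_nonempty hA]

end deltaP

/-- δ_P is an approach distance on [0,∞]. -/
theorem stmt1 : A1 deltaP ∧ A2 deltaP ∧ A3 deltaP ∧ A4 deltaP :=
  ⟨fun x => by simp [deltaP_of_nonempty (Set.singleton_nonempty x)], deltaP_empty,
    deltaP_union, deltaP_le_add_biSup⟩
end

section
/- Let S ⊆ [0,∞]^X satisfy: (R1) S is closed under pointwise suprema of arbitrary families, (R2) S is closed under binary pointwise minima, (R3) for φ ∈ S and r ∈ [0,∞], both φ + r and φ ⊖ r are in S. Define δ(x,A) = sup{φ(x) | φ ∈ S and φ(a) = 0 for all a ∈ A}. Then (X,δ) is an approach space whose set of regular functions equals S. -/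
open ENNReal

universe u

variable {X : Type u}

/-!
Every regular function `φ` satisfies `φ ≤ δ(·, {φ ≤ r}) + r` for all `r`, with equality on
`{φ = r}`, and for the generated distance each `δ(·, A)` lies in `S`. Minimising these upper bounds
over the finite grid `r = kε`, `k < n`, truncating at `nε` and subtracting `ε` produces members of
`S` below `φ` that exceed any `t < φ x` at `x` once `ε` is small and `n` large; by (R1) their
supremum `φ` lies in `S`.
-/

noncomputable def generatedDist (S : Set (X → ℝ≥0∞)) (x : X) (A : Set X) : ℝ≥0∞ :=
  ⨆ (φ : X → ℝ≥0∞) (_ : φ ∈ S ∧ ∀ a ∈ A, φ a = 0), φ x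

section generatedDist

variable {S : Set (X → ℝ≥0∞)} {φ : X → ℝ≥0∞} {x : X} {A B : Set X}

theorem le_generatedDist (hφ : φ ∈ S) (h0 : ∀ a ∈ A, φ a = 0) : φ x ≤ generatedDist S x A :=
  le_iSup₂_of_le φ ⟨hφ, h0⟩ le_rfl

theorem generatedDist_le {c : ℝ≥0∞} (h : ∀ φ ∈ S, (∀ a ∈ A, φ a = 0) → φ x ≤ c) :
    generatedDist S x A ≤ c :=
  iSup₂_le fun φ hφ => h φ hφ.1 hφ.2

theorem lt_generatedDist_iff {c : ℝ≥0∞} :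
    c < generatedDist S x A ↔ ∃ φ ∈ S, (∀ a ∈ A, φ a = 0) ∧ c < φ x := by
  simp only [generatedDist, lt_iSup_iff, exists_prop, and_assoc]

theorem generatedDist_of_mem (hx : x ∈ A) : generatedDist S x A = 0 :=
  nonpos_iff_eq_zero.1 <| generatedDist_le fun _ _ h0 => (h0 x hx).le

theorem generatedDist_anti (hAB : A ⊆ B) : generatedDist S x B ≤ generatedDist S x A :=
  generatedDist_le fun _ hφ h0 => le_generatedDist hφ fun a ha => h0 a (hAB ha)

theorem generatedDist_mem (hR1 : ∀ T ⊆ S, (fun x => ⨆ φ ∈ T, φ x) ∈ S) (A : Set X) :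
    (fun x => generatedDist S x A) ∈ S :=
  hR1 {φ | φ ∈ S ∧ ∀ a ∈ A, φ a = 0} fun _ hφ => hφ.1

theorem A1_generatedDist : A1 (generatedDist S) := fun _ => generatedDist_of_mem rfl

theorem A2_generatedDist (htop : (fun _ => ∞) ∈ S) : A2 (generatedDist S) := fun x =>
  top_unique <| le_generatedDist (x := x) htop fun _ h => h.elim

theorem A3_generatedDist (hR2 : ∀ φ ∈ S, ∀ ψ ∈ S, (fun x => min (φ x) (ψ x)) ∈ S) :
    A3 (generatedDist S) := by
  refine fun x A B => le_antisymm
    (le_min (generatedDist_anti Set.subset_union_left) (generatedDist_anti Set.subset_union_right))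
    (le_of_forall_lt fun c hc => ?_)
  obtain ⟨φ, hφ, hφA, hcφ⟩ := lt_generatedDist_iff.1 (hc.trans_le (min_le_left _ _))
  obtain ⟨ψ, hψ, hψB, hcψ⟩ := lt_generatedDist_iff.1 (hc.trans_le (min_le_right _ _))
  refine (lt_min hcφ hcψ).trans_le (le_generatedDist (hR2 φ hφ ψ hψ) ?_)
  rintro a (ha | ha)
  · simp [hφA a ha]
  · simp [hψB a ha]

theorem A4_generatedDist (hsub : ∀ φ ∈ S, ∀ r : ℝ≥0∞, (fun x => φ x - r) ∈ S) :
    A4 (generatedDist S) := by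
  intro x A B
  refine generatedDist_le fun φ hφ h0 => tsub_le_iff_right.1 <| le_generatedDist (hsub φ hφ _) ?_
  intro b hb
  exact tsub_eq_zero_of_le <| (le_generatedDist hφ h0).trans (le_iSup₂_of_le b hb le_rfl)

theorem isRegularFn_generatedDist_of_mem (hsub : ∀ φ ∈ S, ∀ r : ℝ≥0∞, (fun x => φ x - r) ∈ S)
    (hφ : φ ∈ S) : IsRegularFn (generatedDist S) φ := fun _ _ =>
  le_generatedDist (hsub φ hφ _) fun _ ha => tsub_eq_zero_of_le (le_iSup₂_of_le _ ha le_rfl)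

end generatedDist

theorem IsRegularFn.le_add_sublevel {δ : X → Set X → ℝ≥0∞} {φ : X → ℝ≥0∞}
    (hφ : IsRegularFn δ φ) (x : X) (r : ℝ≥0∞) : φ x ≤ δ x {a | φ a ≤ r} + r := by
  have hsup : ⨆ a ∈ {a | φ a ≤ r}, φ a ≤ r := iSup₂_le fun _ ha => ha
  exact tsub_le_iff_right.1 ((tsub_le_tsub_left hsup _).trans (hφ x _))

theorem exists_lt_nat_mul_between_or (a ε : ℝ≥0∞) (n : ℕ) :
    (∃ k < n, a ≤ k * ε ∧ k * ε ≤ a + ε) ∨ n * ε ≤ a + ε := by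
  induction n with
  | zero => simp
  | succ n ih =>
    rcases ih with ⟨k, hk, hak⟩ | hn
    · exact .inl ⟨k, by omega, hak⟩
    by_cases ha : a ≤ n * ε
    · exact .inl ⟨n, n.lt_succ_self, ha, hn⟩
    · push_cast
      rw [add_mul, one_mul]
      exact .inr (by gcongr; exact (not_le.1 ha).le)

noncomputable def gridMajorant (δ : X → Set X → ℝ≥0∞) (φ : X → ℝ≥0∞) (ε : ℝ≥0∞) (n : ℕ) :
    X → ℝ≥0∞ :=
  (fun _ => n * ε) ⊓ (Finset.range n).inf fun k y => δ y {a | φ a ≤ k * ε} + k * ε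

theorem IsRegularFn.min_le_gridMajorant {δ : X → Set X → ℝ≥0∞} {φ : X → ℝ≥0∞}
    (hφ : IsRegularFn δ φ) (ε : ℝ≥0∞) (n : ℕ) (x : X) :
    min (n * ε) (φ x) ≤ gridMajorant δ φ ε n x := by
  simp only [gridMajorant, Pi.inf_apply, Finset.inf_apply]
  exact min_le_min_left _ (Finset.le_inf fun k _ => hφ.le_add_sublevel x _)

theorem gridMajorant_le_add {δ : X → Set X → ℝ≥0∞} (hδ : ∀ x A, x ∈ A → δ x A = 0)
    (φ : X → ℝ≥0∞) (ε : ℝ≥0∞) (n : ℕ) (x : X) : gridMajorant δ φ ε n x ≤ φ x + ε := by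
  simp only [gridMajorant, Pi.inf_apply, Finset.inf_apply]
  rcases exists_lt_nat_mul_between_or (φ x) ε n with ⟨k, hk, hxk, hkε⟩ | hn
  · refine inf_le_right.trans <| (Finset.inf_le (Finset.mem_range.2 hk)).trans ?_
    simpa [hδ x {a | φ a ≤ k * ε} hxk] using hkε
  · exact inf_le_left.trans hn

section membership

variable {S : Set (X → ℝ≥0∞)}
  (hR1 : ∀ T ⊆ S, (fun x => ⨆ φ ∈ T, φ x) ∈ S)
  (hR2 : ∀ φ ∈ S, ∀ ψ ∈ S, (fun x => min (φ x) (ψ x)) ∈ S)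
  (hR3 : ∀ φ ∈ S, ∀ r : ℝ≥0∞, (fun x => φ x + r) ∈ S ∧ (fun x => φ x - r) ∈ S)
include hR1 hR3

theorem const_mem (r : ℝ≥0∞) : (fun _ : X => r) ∈ S := by
  have hzero : (fun _ : X => (0 : ℝ≥0∞)) ∈ S := by simpa using hR1 ∅ (Set.empty_subset S)
  simpa only [zero_add] using (hR3 _ hzero r).1

include hR2

theorem gridMajorant_mem (φ : X → ℝ≥0∞) (ε : ℝ≥0∞) (n : ℕ) :
    gridMajorant (generatedDist S) φ ε n ∈ S :=
  hR2 _ (const_mem hR1 hR3 _) _ <| Finset.inf_induction (const_mem hR1 hR3 ∞)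
    (fun _ hφ _ hψ => hR2 _ hφ _ hψ) fun _ _ => (hR3 _ (generatedDist_mem hR1 _) _).1

theorem exists_mem_le_lt_of_isRegularFn {φ : X → ℝ≥0∞} (hφ : IsRegularFn (generatedDist S) φ)
    {x : X} {t : ℝ≥0∞} (ht : t < φ x) : ∃ ψ ∈ S, ψ ≤ φ ∧ t < ψ x := by
  obtain ⟨u, htu, hux⟩ := exists_between ht
  set ε := u - t
  have hε : ε ≠ 0 := (tsub_pos_of_lt htu).ne'
  have htε : t + ε < φ x := by rwa [add_tsub_cancel_of_le htu.le]
  obtain ⟨n, hn⟩ := ENNReal.exists_nat_mul_gt hε htε.ne_top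
  refine ⟨fun y => gridMajorant (generatedDist S) φ ε n y - ε,
    (hR3 _ (gridMajorant_mem hR1 hR2 hR3 φ ε n) ε).2,
    fun y => tsub_le_iff_right.2 (gridMajorant_le_add (fun _ _ => generatedDist_of_mem) φ ε n y),
    lt_tsub_iff_right.2 ((lt_min hn htε).trans_le (hφ.min_le_gridMajorant ε n x))⟩

theorem mem_of_isRegularFn {φ : X → ℝ≥0∞} (hφ : IsRegularFn (generatedDist S) φ) : φ ∈ S := by
  convert hR1 {ψ | ψ ∈ S ∧ ψ ≤ φ} fun _ h => h.1
  refine le_antisymm (le_of_forall_lt fun t ht => ?_) (iSup₂_le fun ψ h => h.2 _)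
  obtain ⟨ψ, hψ, hψφ, htψ⟩ := exists_mem_le_lt_of_isRegularFn hR1 hR2 hR3 hφ ht
  exact htψ.trans_le (le_iSup₂_of_le ψ ⟨hψ, hψφ⟩ le_rfl)

end membership

/-- A set of functions satisfying (R1)-(R3) is the set of regular functions of the
approach space it generates. -/
theorem stmt3 (S : Set (X → ℝ≥0∞))
    (hR1 : ∀ T ⊆ S, (fun x => ⨆ φ ∈ T, φ x) ∈ S)
    (hR2 : ∀ φ ∈ S, ∀ ψ ∈ S, (fun x => min (φ x) (ψ x)) ∈ S)
    (hR3 : ∀ φ ∈ S, ∀ r : ℝ≥0∞, (fun x => φ x + r) ∈ S ∧ (fun x => φ x - r) ∈ S)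
    (δ : X → Set X → ℝ≥0∞)
    (hδ : ∀ x A, δ x A = ⨆ (φ : X → ℝ≥0∞) (_ : φ ∈ S ∧ ∀ a ∈ A, φ a = 0), φ x) :
    A1 δ ∧ A2 δ ∧ A3 δ ∧ A4 δ ∧ {φ | IsRegularFn δ φ} = S := by
  obtain rfl : δ = generatedDist S := funext₂ hδ
  have hsub : ∀ φ ∈ S, ∀ r : ℝ≥0∞, (fun x => φ x - r) ∈ S := fun φ hφ r => (hR3 φ hφ r).2
  exact ⟨A1_generatedDist, A2_generatedDist (const_mem hR1 hR3 ∞), A3_generatedDist hR2,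
    A4_generatedDist hsub, Set.ext fun φ =>
      ⟨mem_of_isRegularFn hR1 hR2 hR3, isRegularFn_generatedDist_of_mem hsub⟩⟩
end

section
/- Let (X,d) be a metric space. Every forward Cauchy net {φ_i}_i in the metric space (𝒫X, d̄) of weights has a Yoneda limit, given pointwise by φ(x) = inf_i sup_{j ≥ i} φ_j(x). -/
open ENNReal

universe u

variable {X : Type u}

/-
The pointwise limit `Φ x = inf_i sup_{j ≥ i} φ_j x` is a weight, being an infimum of suprema of
weights. Forward Cauchyness says `d̄(φ_j, Φ) ≤ sup_{k ≥ j} d̄(φ_j, φ_k)` becomes small along the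
net, so the triangle inequality for `d̄` gives `inf_i sup_{j ≥ i} d̄(φ_j, ψ) ≤ d̄(Φ, ψ)`. The
reverse inequality only needs directedness: `ψ x ⊖ Φ x = sup_i' (ψ x ⊖ sup_{j ≥ i'} φ_j x)`,
and for `k` above both `i` and `i'` each term is at most `d̄(φ_k, ψ) ≤ sup_{j ≥ i} d̄(φ_j, ψ)`.
-/

theorem dbar_le_iff {φ ψ : X → ℝ≥0∞} {c : ℝ≥0∞} : dbar φ ψ ≤ c ↔ ∀ x, ψ x ≤ c + φ x := by
  simp only [dbar, iSup_le_iff, tsub_le_iff_right]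

theorem le_dbar_add (φ ψ : X → ℝ≥0∞) (x : X) : ψ x ≤ dbar φ ψ + φ x :=
  dbar_le_iff.1 le_rfl x

theorem dbar_triangle (φ χ ψ : X → ℝ≥0∞) : dbar φ ψ ≤ dbar φ χ + dbar χ ψ :=
  dbar_le_iff.2 fun x =>
    calc ψ x ≤ dbar χ ψ + χ x := le_dbar_add χ ψ x
      _ ≤ dbar χ ψ + (dbar φ χ + φ x) := by gcongr; exact le_dbar_add φ χ x
      _ = dbar φ χ + dbar χ ψ + φ x := by ring

theorem IsWeight.iSup {m : GMetric X} {κ : Sort*} {f : κ → X → ℝ≥0∞}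
    (hf : ∀ k, IsWeight m (f k)) : IsWeight m (fun x => ⨆ k, f k x) := fun x y =>
  iSup_le fun k => (hf k x y).trans (by gcongr; exact le_iSup (f · y) k)

theorem IsWeight.iInf {m : GMetric X} {κ : Sort*} {f : κ → X → ℝ≥0∞}
    (hf : ∀ k, IsWeight m (f k)) : IsWeight m (fun x => ⨅ k, f k x) := fun x y => by
  rw [ENNReal.iInf_add]
  exact le_iInf fun k => (iInf_le (f · x) k).trans (hf k x y)

section NetLimsup

variable {ι : Type*} (le : ι → ι → Prop)

noncomputable def netLimsup (f : ι → ℝ≥0∞) : ℝ≥0∞ := ⨅ i, ⨆ j, ⨆ (_ : le i j), f j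

variable {le} (φ : ι → X → ℝ≥0∞)

theorem IsWeight.netLimsup {m : GMetric X} (hw : ∀ i, IsWeight m (φ i)) :
    IsWeight m (fun x => netLimsup le (φ · x)) :=
  IsWeight.iInf fun _ => IsWeight.iSup fun j => IsWeight.iSup fun _ => hw j

theorem dbar_netLimsup_le (j : ι) :
    dbar (φ j) (fun x => netLimsup le (φ · x)) ≤ ⨆ k, ⨆ (_ : le j k), dbar (φ j) (φ k) :=
  dbar_le_iff.2 fun x =>
    calc netLimsup le (φ · x) ≤ ⨆ k, ⨆ (_ : le j k), φ k x := iInf_le _ j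
      _ ≤ (⨆ k, ⨆ (_ : le j k), dbar (φ j) (φ k)) + φ j x :=
        iSup₂_le fun k hjk => (le_dbar_add (φ j) (φ k) x).trans <| by
          gcongr; exact le_iSup₂ (f := fun k (_ : le j k) => dbar (φ j) (φ k)) k hjk

theorem dbar_netLimsup_le_netLimsup (hdir : ∀ i j, ∃ k, le i k ∧ le j k) (ψ : X → ℝ≥0∞) :
    dbar (fun x => netLimsup le (φ · x)) ψ ≤ netLimsup le (fun j => dbar (φ j) ψ) :=
  le_iInf fun i => dbar_le_iff.2 fun x => by
    rw [netLimsup, ENNReal.add_iInf]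
    refine le_iInf fun i' => ?_
    obtain ⟨k, hik, hi'k⟩ := hdir i i'
    calc ψ x ≤ dbar (φ k) ψ + φ k x := le_dbar_add (φ k) ψ x
      _ ≤ (⨆ j, ⨆ (_ : le i j), dbar (φ j) ψ) + ⨆ j, ⨆ (_ : le i' j), φ j x := by
        gcongr
        · exact le_iSup₂ (f := fun j (_ : le i j) => dbar (φ j) ψ) k hik
        · exact le_iSup₂ (f := fun j (_ : le i' j) => φ j x) k hi'k

theorem netLimsup_dbar_le_dbar_netLimsup
    (hfc : (⨅ i, ⨆ j, ⨆ (_ : le i j), ⨆ k, ⨆ (_ : le j k), dbar (φ j) (φ k)) = 0)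
    (ψ : X → ℝ≥0∞) :
    netLimsup le (fun j => dbar (φ j) ψ) ≤ dbar (fun x => netLimsup le (φ · x)) ψ :=
  calc netLimsup le (fun j => dbar (φ j) ψ)
      ≤ ⨅ i, (⨆ j, ⨆ (_ : le i j), ⨆ k, ⨆ (_ : le j k), dbar (φ j) (φ k)) +
          dbar (fun x => netLimsup le (φ · x)) ψ :=
        iInf_mono fun _ => iSup₂_le fun j hij =>
          (dbar_triangle _ (fun x => netLimsup le (φ · x)) _).trans <| by
            gcongr
            exact (dbar_netLimsup_le φ j).trans
              (le_iSup₂ (f := fun j (_ : le _ j) => ⨆ k, ⨆ (_ : le j k), dbar (φ j) (φ k)) j hij)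
    _ = dbar (fun x => netLimsup le (φ · x)) ψ := by rw [← ENNReal.iInf_add, hfc, zero_add]

end NetLimsup

/-- Every forward Cauchy net of weights has a Yoneda limit in (𝒫X, d̄), computed pointwise. -/
theorem stmt5 {ι : Type*} (m : GMetric X) (le : ι → ι → Prop) (φ : ι → X → ℝ≥0∞)
    (hw : ∀ i, IsWeight m (φ i)) (hdir : DirIdx le)
    (hfc : (⨅ i, ⨆ j, ⨆ (_ : le i j), ⨆ k, ⨆ (_ : le j k), dbar (φ j) (φ k)) = 0) :
    IsWeight m (fun x => ⨅ i, ⨆ j, ⨆ (_ : le i j), φ j x) ∧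
    ∀ ψ : X → ℝ≥0∞, IsWeight m ψ →
      dbar (fun x => ⨅ i, ⨆ j, ⨆ (_ : le i j), φ j x) ψ
        = ⨅ i, ⨆ j, ⨆ (_ : le i j), dbar (φ j) ψ :=
  ⟨IsWeight.netLimsup φ hw, fun ψ _ =>
    le_antisymm (dbar_netLimsup_le_netLimsup φ hdir.2.2.2 ψ)
      (netLimsup_dbar_le_dbar_netLimsup φ hfc ψ)⟩
end

section
/- For each metric space (X,d), the Scott approach distance σ satisfies σ(x,{y}) = d(x,y) for all x,y ∈ X; that is, the specialization metric of the Scott approach space of (X,d) recovers d. -/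
open ENNReal

universe u

variable {X : Type u}

/-! The distance to `y` is itself a Scott weight vanishing at `y`: the condition a Yoneda limit
imposes on `d(-, y)` is exactly the Scott condition for it. Conversely every weight vanishing at `y`
is bounded by `d(-, y)`, so it is the largest one. -/

theorem IsWeight.le_dist_of_eq_zero {m : GMetric X} {φ : X → ℝ≥0∞} (hφ : IsWeight m φ)
    (x : X) {a : X} (ha : φ a = 0) : φ x ≤ m.d x a := by
  simpa [ha] using hφ x a

theorem scottDist_le_dist (m : GMetric X) (x : X) {A : Set X} {a : X} (ha : a ∈ A) :
    scottDist m x A ≤ m.d x a :=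
  iSup₂_le fun _ hφ => hφ.1.1.le_dist_of_eq_zero x (hφ.2 a ha)

theorem isWeight_dist_right (m : GMetric X) (y : X) : IsWeight m (m.d · y) :=
  fun a b => (m.triangle a b y).trans_eq (add_comm _ _)

theorem scottWeight_dist_right (m : GMetric X) (y : X) : ScottWeight m (m.d · y) :=
  ⟨isWeight_dist_right m y, fun _ _ _ _ _ hlim => (hlim y).le⟩

/-- The specialization metric of the Scott approach distance recovers d. -/
theorem stmt10 (m : GMetric X) (x y : X) : scottDist m x {y} = m.d x y := by
  refine le_antisymm (scottDist_le_dist m x rfl) (le_iSup₂_of_le (m.d · y) ⟨?_, ?_⟩ le_rfl)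
  · exact scottWeight_dist_right m y
  · rintro a rfl
    exact m.refl a
end

section
/- A map f : (X,d_X) → (Y,d_Y) between metric spaces is Yoneda continuous if and only if f is a contraction with respect to the Scott approach distances, i.e., σ_X(x,A) ≥ σ_Y(f(x), f(A)) for all x ∈ X and A ⊆ X. -/
open ENNReal

universe u

variable {X : Type u}

/-! The forward direction pulls Scott weights back along `f`: Yoneda continuity is exactly what
makes `φ ∘ f` a Scott weight again, so every weight competing in `σ_Y(f x, f A)` yields one
competing in `σ_X(x, A)`. For the converse, `σ(x, {y}) = d(x, y)` recovers non-expansiveness, and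
the Scott weights `z ↦ d(z, y) ⊖ c` test the Yoneda limit against the tails of the image net: the
tails of a net have Scott distance `0` from its Yoneda limit, and the contraction property
transports this to `Y`. -/

def YonedaContinuous {Y : Type u} (mX : GMetric X) (mY : GMetric Y) (f : X → Y) : Prop :=
  (∀ x y : X, mY.d (f x) (f y) ≤ mX.d x y) ∧
    ∀ (ι : Type u) (le : ι → ι → Prop) (x : ι → X) (a : X),
      ForwardCauchy mX le x → YonedaLimit mX le x a → YonedaLimit mY le (fun i => f (x i)) (f a)

section NonExpansive

variable {Y : Type*} {mX : GMetric X} {mY : GMetric Y} {f : X → Y}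

theorem IsWeight.comp (hf : ∀ x y, mY.d (f x) (f y) ≤ mX.d x y) {φ : Y → ℝ≥0∞}
    (hφ : IsWeight mY φ) : IsWeight mX (φ ∘ f) := fun x y =>
  (hφ (f x) (f y)).trans (add_le_add le_rfl (hf x y))

theorem ForwardCauchy.map (hf : ∀ x y, mY.d (f x) (f y) ≤ mX.d x y) {ι : Type*}
    {le : ι → ι → Prop} {x : ι → X} (hx : ForwardCauchy mX le x) :
    ForwardCauchy mY le (f ∘ x) := by
  refine ⟨hx.1, le_antisymm (le_trans ?_ hx.2.le) zero_le⟩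
  gcongr with i j _ k _
  exact hf _ _

theorem iInf_iSup_dist_map_le_of_yonedaLimit (hf : ∀ x y, mY.d (f x) (f y) ≤ mX.d x y)
    {ι : Type*} {le : ι → ι → Prop} {x : ι → X} {a : X} (ha : YonedaLimit mX le x a) (y : Y) :
    ⨅ i, ⨆ j, ⨆ (_ : le i j), mY.d (f (x j)) y ≤ mY.d (f a) y := by
  have hlim : ⨅ i, ⨆ j, ⨆ (_ : le i j), mX.d (x j) a = 0 := by
    rw [← ha a, mX.refl]
  calc ⨅ i, ⨆ j, ⨆ (_ : le i j), mY.d (f (x j)) y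
      ≤ ⨅ i, (⨆ j, ⨆ (_ : le i j), mX.d (x j) a) + mY.d (f a) y := by
        refine iInf_mono fun i => iSup₂_le fun j hj => (mY.triangle _ (f a) _).trans ?_
        gcongr
        exact (hf _ _).trans (le_iSup₂_of_le (f := fun j (_ : le i j) => mX.d (x j) a) j hj le_rfl)
    _ = mY.d (f a) y := by rw [← ENNReal.iInf_add, hlim, zero_add]

end NonExpansive

section ScottDistance

variable (m : GMetric X)

theorem scottWeight_dist_tsub (y : X) (c : ℝ≥0∞) : ScottWeight m (fun z => m.d z y - c) := by
  refine ⟨fun a b => ?_, fun ι le x a _ ha => ?_⟩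
  · rw [tsub_le_iff_right]
    calc m.d a y ≤ m.d a b + m.d b y := m.triangle a b y
      _ ≤ m.d a b + ((m.d b y - c) + c) := by gcongr; exact le_tsub_add
      _ = m.d b y - c + m.d a b + c := by ring
  · dsimp only
    rw [ha y]
    refine le_iInf fun i => (tsub_le_tsub_right (iInf_le _ i) c).trans ?_
    rw [tsub_le_iff_right]
    refine iSup₂_le fun j hj => (le_tsub_add (a := c)).trans ?_
    gcongr
    exact le_iSup₂_of_le (f := fun j (_ : le i j) => m.d (x j) y - c) j hj le_rfl

variable {m}

theorem dist_tsub_le_scottDist {x y : X} {A : Set X} {c : ℝ≥0∞} (hA : ∀ b ∈ A, m.d b y ≤ c) :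
    m.d x y - c ≤ scottDist m x A :=
  le_iSup₂_of_le (f := fun φ (_ : ScottWeight m φ ∧ ∀ a ∈ A, φ a = 0) => φ x)
    (fun z => m.d z y - c) ⟨scottWeight_dist_tsub m y c, fun b hb => tsub_eq_zero_of_le (hA b hb)⟩
    le_rfl

theorem scottDist_singleton (x y : X) : scottDist m x {y} = m.d x y := by
  refine le_antisymm (iSup₂_le fun φ ⟨⟨hw, _⟩, hy⟩ => ?_) ?_
  · simpa [hy y rfl] using hw x y
  · simpa using dist_tsub_le_scottDist (x := x) (A := {y}) (c := 0)
      (by simp [m.refl])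

theorem scottDist_tail_eq_zero {ι : Type u} {le : ι → ι → Prop} {x : ι → X} {a : X}
    (hx : ForwardCauchy m le x) (ha : YonedaLimit m le x a) (i : ι) :
    scottDist m a (x '' {j | le i j}) = 0 := by
  refine nonpos_iff_eq_zero.mp (iSup₂_le fun φ ⟨⟨_, hφ⟩, hzero⟩ => ?_)
  refine (hφ ι le x a hx ha).trans ((iInf_le _ i).trans (iSup₂_le fun j hj => ?_))
  exact (hzero (x j) ⟨j, hj, rfl⟩).le

end ScottDistance

section YonedaContinuous

variable {Y : Type u} {mX : GMetric X} {mY : GMetric Y} {f : X → Y}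

theorem ScottWeight.comp (hf : YonedaContinuous mX mY f) {φ : Y → ℝ≥0∞}
    (hφ : ScottWeight mY φ) : ScottWeight mX (φ ∘ f) :=
  ⟨hφ.1.comp hf.1, fun ι le x a hx ha =>
    hφ.2 ι le (f ∘ x) (f a) (hx.map hf.1) (hf.2 ι le x a hx ha)⟩

theorem YonedaContinuous.scottDist_image_le (hf : YonedaContinuous mX mY f) (x : X)
    (A : Set X) : scottDist mY (f x) (f '' A) ≤ scottDist mX x A :=
  iSup₂_le fun φ ⟨hφ, hzero⟩ =>
    le_iSup₂_of_le (f := fun ψ (_ : ScottWeight mX ψ ∧ ∀ a ∈ A, ψ a = 0) => ψ x) (φ ∘ f)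
      ⟨hφ.comp hf, fun a ha => hzero (f a) ⟨a, ha, rfl⟩⟩ le_rfl

theorem yonedaContinuous_of_scottDist_image_le
    (hf : ∀ x A, scottDist mY (f x) (f '' A) ≤ scottDist mX x A) : YonedaContinuous mX mY f := by
  have hne : ∀ x y, mY.d (f x) (f y) ≤ mX.d x y := fun x y => by
    simpa [Set.image_singleton, scottDist_singleton] using hf x {y}
  refine ⟨hne, fun ι le x a hx ha y => le_antisymm (le_iInf fun i => ?_)
    (iInf_iSup_dist_map_le_of_yonedaLimit hne ha y)⟩
  have htail : mY.d (f a) y - ⨆ j, ⨆ (_ : le i j), mY.d (f (x j)) y = 0 := by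
    refine nonpos_iff_eq_zero.mp ((dist_tsub_le_scottDist ?_).trans
      ((hf a _).trans (scottDist_tail_eq_zero hx ha i).le))
    rintro _ ⟨_, ⟨j, hj, rfl⟩, rfl⟩
    exact le_iSup₂_of_le (f := fun j (_ : le i j) => mY.d (f (x j)) y) j hj le_rfl
  exact tsub_eq_zero_iff_le.mp htail

end YonedaContinuous

/-- A map between metric spaces is Yoneda continuous iff it is a contraction with respect to
the Scott approach distances. -/
theorem stmt11 {Y : Type u} (mX : GMetric X) (mY : GMetric Y) (f : X → Y) :
    ((∀ x y : X, mY.d (f x) (f y) ≤ mX.d x y) ∧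
      ∀ (ι : Type u) (le : ι → ι → Prop) (x : ι → X) (a : X),
        ForwardCauchy mX le x → YonedaLimit mX le x a →
        YonedaLimit mY le (fun i => f (x i)) (f a)) ↔
    (∀ (x : X) (A : Set X), scottDist mY (f x) (f '' A) ≤ scottDist mX x A) :=
  ⟨YonedaContinuous.scottDist_image_le, yonedaContinuous_of_scottDist_image_le⟩
end

section
/- For a weight φ of a metric space (X,d), the following are equivalent: (1) φ is flat; (2) inf_x φ(x) = 0 and the set B⁺φ = {(x,r) ∈ X × [0,∞) | φ(x) < r}, preordered by (x,r) ⊑ (y,s) iff r ≥ s + d(x,y), is directed; (3) there is a forward Cauchy net {x_i} in (X,d) with φ = inf_i sup_{j≥i} d(−, x_j). -/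
open ENNReal

universe u

variable {X : Type u}

/-!
Testing flatness on the coweights `d(a, -) + c`, whose tensor with a weight is `φ a + c`, shows
that for balls `(a, r)`, `(b, s)` of `B⁺φ` there is a point `z` with `φ z + d(a, z) < r` and
`φ z + d(b, z) < s`; it is the centre of a common upper bound. Conversely, when `B⁺φ` is directed
and `inf φ = 0`, the centres of its balls form a forward Cauchy net indexed by `B⁺φ` itself whose
weight `inf_i sup_{j ≥ i} d(-, x_j)` is `φ`. Finally, for the weight of a forward Cauchy net,
`φ ⊗ ψ` is the limit superior of the coweight `ψ` along the net, and limits superior along a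
directed index commute with binary maxima.
-/

theorem iInf_sup_eq_of_directed {α ι : Type*} [Order.Coframe α] {le : ι → ι → Prop}
    (hdir : ∀ i j, ∃ k, le i k ∧ le j k) {f g : ι → α}
    (hf : ∀ i j, le i j → f j ≤ f i) (hg : ∀ i j, le i j → g j ≤ g i) :
    ⨅ i, f i ⊔ g i = (⨅ i, f i) ⊔ ⨅ i, g i := by
  refine le_antisymm ?_ (le_iInf fun i => sup_le_sup (iInf_le f i) (iInf_le g i))
  rw [iInf_sup_iInf]
  refine le_iInf fun ij => ?_
  obtain ⟨k, hk₁, hk₂⟩ := hdir ij.1 ij.2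
  exact (iInf_le _ k).trans (sup_le_sup (hf _ _ hk₁) (hg _ _ hk₂))

section Net

variable {ι : Type*} {le : ι → ι → Prop}

noncomputable def tailSup (le : ι → ι → Prop) (f : ι → ℝ≥0∞) (i : ι) : ℝ≥0∞ :=
  ⨆ j, ⨆ (_ : le i j), f j

theorem le_tailSup {f : ι → ℝ≥0∞} {i j : ι} (h : le i j) : f j ≤ tailSup le f i :=
  le_iSup₂ (f := fun j (_ : le i j) => f j) j h

theorem tailSup_anti (htrans : ∀ ⦃i j k⦄, le i j → le j k → le i k) (f : ι → ℝ≥0∞) {i i' : ι}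
    (h : le i i') :
    tailSup le f i' ≤ tailSup le f i :=
  iSup₂_le fun _ hj => le_tailSup (htrans h hj)

theorem tailSup_max (f g : ι → ℝ≥0∞) (i : ι) :
    tailSup le (fun j => max (f j) (g j)) i = max (tailSup le f i) (tailSup le g i) := by
  simp only [tailSup, ← iSup_sup_eq]

theorem iInf_tailSup_max (htrans : ∀ ⦃i j k⦄, le i j → le j k → le i k)
    (hdir : ∀ i j, ∃ k, le i k ∧ le j k) (f g : ι → ℝ≥0∞) :
    ⨅ i, tailSup le (fun j => max (f j) (g j)) i =
      max (⨅ i, tailSup le f i) (⨅ i, tailSup le g i) := by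
  simp only [tailSup_max]
  exact iInf_sup_eq_of_directed hdir (fun _ _ => tailSup_anti htrans f)
    (fun _ _ => tailSup_anti htrans g)

noncomputable def netWeight (m : GMetric X) (le : ι → ι → Prop) (x : ι → X) (y : X) : ℝ≥0∞ :=
  ⨅ i, tailSup le (fun j => m.d y (x j)) i

variable {m : GMetric X} {x : ι → X}

theorem isWeight_netWeight : IsWeight m (netWeight m le x) := fun y z =>
  calc netWeight m le x y ≤ ⨅ i, (tailSup le (fun j => m.d z (x j)) i + m.d y z) :=
        iInf_mono fun _ => iSup₂_le fun j hj =>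
          (m.triangle y z (x j)).trans (by rw [add_comm]; gcongr; exact le_tailSup hj)
    _ = netWeight m le x z + m.d y z := ENNReal.iInf_add.symm

theorem ForwardCauchy.exists_netWeight_lt (hc : ForwardCauchy m le x) {ε : ℝ≥0∞} (hε : 0 < ε)
    (i : ι) : ∃ j, le i j ∧ netWeight m le x (x j) < ε := by
  obtain ⟨i', hi'⟩ := iInf_eq_bot.1 hc.2 ε hε
  obtain ⟨j, hij, hi'j⟩ := hc.1.2.2.2 i i'
  refine ⟨j, hij, ?_⟩
  calc netWeight m le x (x j) ≤ tailSup le (fun k => m.d (x j) (x k)) j := iInf_le _ j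
    _ ≤ tailSup le (fun j => tailSup le (fun k => m.d (x j) (x k)) j) i' := le_tailSup hi'j
    _ < ε := hi'

theorem ForwardCauchy.tensor_netWeight (hc : ForwardCauchy m le x) {ψ : X → ℝ≥0∞}
    (hψ : IsCoweight m ψ) :
    tensor (netWeight m le x) ψ = ⨅ i, tailSup le (fun j => ψ (x j)) i := by
  refine le_antisymm (le_iInf fun i => ENNReal.le_of_forall_pos_le_add fun ε hε _ => ?_)
    (le_iInf fun z => ?_)
  · obtain ⟨j, hij, hj⟩ := hc.exists_netWeight_lt (ENNReal.coe_pos.2 hε) i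
    calc tensor (netWeight m le x) ψ ≤ netWeight m le x (x j) + ψ (x j) := iInf_le _ (x j)
      _ ≤ ε + tailSup le (fun j => ψ (x j)) i := add_le_add hj.le (le_tailSup hij)
      _ = _ := add_comm _ _
  · calc ⨅ i, tailSup le (fun j => ψ (x j)) i
        ≤ ⨅ i, (ψ z + tailSup le (fun j => m.d z (x j)) i) :=
          iInf_mono fun _ => iSup₂_le fun j hj =>
            (hψ z (x j)).trans (by gcongr; exact le_tailSup hj)
      _ = ψ z + netWeight m le x z := ENNReal.add_iInf.symm
      _ = _ := add_comm _ _

theorem IsCoweight.max {ψ₁ ψ₂ : X → ℝ≥0∞} (h₁ : IsCoweight m ψ₁) (h₂ : IsCoweight m ψ₂) :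
    IsCoweight m (fun z => max (ψ₁ z) (ψ₂ z)) := fun u v =>
  max_le ((h₁ u v).trans (by gcongr; exact le_max_left _ _))
    ((h₂ u v).trans (by gcongr; exact le_max_right _ _))

theorem ForwardCauchy.flatWeight_netWeight (hc : ForwardCauchy m le x) :
    FlatWeight m (netWeight m le x) := by
  obtain ⟨⟨i₀⟩, -, htrans, hdir⟩ := hc.1
  refine ⟨isWeight_netWeight, iInf_eq_bot.2 fun ε hε => ?_, fun ψ₁ ψ₂ h₁ h₂ => ?_⟩
  · obtain ⟨j, -, hj⟩ := hc.exists_netWeight_lt hε i₀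
    exact ⟨x j, hj⟩
  · rw [hc.tensor_netWeight h₁, hc.tensor_netWeight h₂, hc.tensor_netWeight (h₁.max h₂)]
    exact iInf_tailSup_max htrans hdir _ _

end Net

section FormalBalls

variable {m : GMetric X} {φ : X → ℝ≥0∞}

/-- The poset `B⁺φ` of the paper. -/
def upperBalls (φ : X → ℝ≥0∞) : Set (X × ℝ≥0∞) := {p | φ p.1 < p.2 ∧ p.2 < ∞}

def UpperBallsDirected (m : GMetric X) (φ : X → ℝ≥0∞) : Prop :=
  ∀ p q, p ∈ upperBalls φ → q ∈ upperBalls φ → ∃ z ∈ upperBalls φ, ballLE m p z ∧ ballLE m q z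

theorem ballLE_refl (p : X × ℝ≥0∞) : ballLE m p p := by
  simp [ballLE, m.refl]

theorem ballLE_trans {p q r : X × ℝ≥0∞} (hpq : ballLE m p q) (hqr : ballLE m q r) :
    ballLE m p r :=
  calc r.2 + m.d p.1 r.1 ≤ r.2 + m.d q.1 r.1 + m.d p.1 q.1 := by
        rw [add_assoc, add_comm (m.d q.1 r.1)]; gcongr; exact m.triangle _ _ _
    _ ≤ q.2 + m.d p.1 q.1 := by gcongr; exact hqr
    _ ≤ p.2 := hpq

theorem ballLE.dist_le {p q : X × ℝ≥0∞} (h : ballLE m p q) : m.d p.1 q.1 ≤ p.2 :=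
  le_add_self.trans h

theorem ballLE.radius_le {p q : X × ℝ≥0∞} (h : ballLE m p q) : q.2 ≤ p.2 :=
  le_self_add.trans h

theorem ballLE_of_le_tsub_dist {a z : X} {r t : ℝ≥0∞} (hz : m.d a z ≤ r)
    (ht : t ≤ r - m.d a z) : ballLE m (a, r) (z, t) :=
  calc t + m.d a z ≤ r - m.d a z + m.d a z := by gcongr
    _ = r := tsub_add_cancel_of_le hz

theorem isCoweight_dist_add (a : X) (c : ℝ≥0∞) : IsCoweight m (fun z => m.d a z + c) :=
  fun u v =>
  calc m.d a v + c ≤ m.d a u + m.d u v + c := by gcongr; exact m.triangle a u v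
    _ = m.d a u + c + m.d u v := add_right_comm _ _ _

theorem IsWeight.tensor_dist_add (hφ : IsWeight m φ) (a : X) (c : ℝ≥0∞) :
    tensor φ (fun z => m.d a z + c) = φ a + c := by
  refine le_antisymm ((iInf_le _ a).trans (by simp [m.refl])) (le_iInf fun z => ?_)
  calc φ a + c ≤ φ z + m.d a z + c := by gcongr; exact hφ a z
    _ = φ z + (m.d a z + c) := add_assoc _ _ _

theorem FlatWeight.exists_add_dist_lt (hφ : FlatWeight m φ) {a b : X} {r s : ℝ≥0∞}
    (ha : φ a < r) (hb : φ b < s) (hr : r < ∞) (hs : s < ∞) :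
    ∃ z, φ z + m.d a z < r ∧ φ z + m.d b z < s := by
  set t := max r s
  -- raising both radii to `t` turns the two strict inequalities into one about a maximum
  have hshift : ∀ {u v : ℝ≥0∞}, v ≤ t → (u + (t - v) < t ↔ u < v) := fun {u v} hv => by
    have hfin : t - v ≠ ∞ := (tsub_le_self.trans_lt (max_lt hr hs)).ne
    simpa only [add_tsub_cancel_of_le hv] using
      ENNReal.add_lt_add_iff_right (b := u) (c := v) hfin
  have hr_t : r ≤ t := le_max_left r s
  have hs_t : s ≤ t := le_max_right r s
  have hmax : tensor φ (fun z => max (m.d a z + (t - r)) (m.d b z + (t - s))) < t := by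
    rw [hφ.2.2 _ _ (isCoweight_dist_add a _) (isCoweight_dist_add b _),
      hφ.1.tensor_dist_add, hφ.1.tensor_dist_add]
    exact max_lt ((hshift hr_t).2 ha) ((hshift hs_t).2 hb)
  obtain ⟨z, hz⟩ := iInf_lt_iff.1 hmax
  refine ⟨z, (hshift hr_t).1 (lt_of_le_of_lt ?_ hz), (hshift hs_t).1 (lt_of_le_of_lt ?_ hz)⟩ <;>
    rw [add_assoc] <;> gcongr
  exacts [le_max_left _ _, le_max_right _ _]

theorem FlatWeight.upperBallsDirected (hφ : FlatWeight m φ) : UpperBallsDirected m φ := by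
  rintro ⟨a, r⟩ ⟨b, s⟩ ⟨ha, hr⟩ ⟨hb, hs⟩
  obtain ⟨z, hza, hzb⟩ := hφ.exists_add_dist_lt ha hb hr hs
  have hda : m.d a z ≤ r := le_add_self.trans hza.le
  have hdb : m.d b z ≤ s := le_add_self.trans hzb.le
  have hda' : m.d a z ≠ ∞ := (hda.trans_lt hr).ne
  have hdb' : m.d b z ≠ ∞ := (hdb.trans_lt hs).ne
  refine ⟨(z, min (r - m.d a z) (s - m.d b z)), ⟨?_, ?_⟩,
    ballLE_of_le_tsub_dist hda (min_le_left _ _), ballLE_of_le_tsub_dist hdb (min_le_right _ _)⟩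
  · exact lt_min ((ENNReal.cancel_of_ne hda').lt_tsub_iff_right.2 hza)
      ((ENNReal.cancel_of_ne hdb').lt_tsub_iff_right.2 hzb)
  · exact (min_le_left _ _).trans_lt (tsub_le_self.trans_lt hr)

theorem dirIdx_upperBalls (hinf : ⨅ x, φ x = 0) (hdir : UpperBallsDirected m φ) :
    DirIdx (fun p q : upperBalls φ => ballLE m p q) := by
  refine ⟨?_, fun p => ballLE_refl p.1, fun p q r => ballLE_trans, fun p q => ?_⟩
  · obtain ⟨a, ha⟩ := iInf_eq_bot.1 hinf 1 one_pos
    exact ⟨⟨(a, 1), ha, one_lt_top⟩⟩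
  · obtain ⟨z, hz, hpz, hqz⟩ := hdir p q p.2 q.2
    exact ⟨⟨z, hz⟩, hpz, hqz⟩

theorem forwardCauchy_upperBalls (hinf : ⨅ x, φ x = 0) (hdir : UpperBallsDirected m φ) :
    ForwardCauchy m (fun p q : upperBalls φ => ballLE m p q) (fun p => p.1.1) := by
  refine ⟨dirIdx_upperBalls hinf hdir,
    nonpos_iff_eq_zero.1 (ENNReal.le_of_forall_pos_le_add fun ε hε _ => ?_)⟩
  obtain ⟨a, ha⟩ := iInf_eq_bot.1 hinf ε (ENNReal.coe_pos.2 hε)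
  rw [zero_add]
  exact (iInf_le _ ⟨(a, ε), ha, coe_lt_top⟩).trans
    (iSup₂_le fun j hj => iSup₂_le fun k hk => hk.dist_le.trans hj.radius_le)

theorem netWeight_upperBalls (hφ : IsWeight m φ) (hinf : ⨅ x, φ x = 0)
    (hdir : UpperBallsDirected m φ) :
    netWeight m (fun p q : upperBalls φ => ballLE m p q) (fun p => p.1.1) = φ := by
  funext y
  apply le_antisymm
  · refine ENNReal.le_of_forall_pos_le_add fun ε hε hy => ?_
    have hp : (y, φ y + ε) ∈ upperBalls φ :=
      ⟨ENNReal.lt_add_right hy.ne (by simpa using hε.ne'),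
        ENNReal.add_lt_top.2 ⟨hy, coe_lt_top⟩⟩
    exact (iInf_le _ ⟨_, hp⟩).trans (iSup₂_le fun q hq => hq.dist_le)
  · refine le_iInf fun p => ENNReal.le_of_forall_pos_le_add fun ε hε _ => ?_
    obtain ⟨a, ha⟩ := iInf_eq_bot.1 hinf ε (ENNReal.coe_pos.2 hε)
    obtain ⟨w, hw, hpw, haw⟩ := hdir p (a, ε) p.2 ⟨ha, coe_lt_top⟩
    calc φ y ≤ φ w.1 + m.d y w.1 := hφ y w.1
      _ ≤ ε + tailSup (fun p q : upperBalls φ => ballLE m p q) (fun q => m.d y q.1.1) p :=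
          add_le_add (hw.1.le.trans haw.radius_le) (le_tailSup (i := p) (j := ⟨w, hw⟩) hpw)
      _ = _ := add_comm _ _

theorem exists_forwardCauchy_of_upperBallsDirected (hφ : IsWeight m φ) (hinf : ⨅ x, φ x = 0)
    (hdir : UpperBallsDirected m φ) :
    ∃ (ι : Type u) (le : ι → ι → Prop) (x : ι → X),
      ForwardCauchy m le x ∧ φ = netWeight m le x :=
  ⟨_, _, _, forwardCauchy_upperBalls hinf hdir, (netWeight_upperBalls hφ hinf hdir).symm⟩

end FormalBalls

/-- Characterizations of flat weights: via directedness of B⁺φ and via forward Cauchy nets. -/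
theorem stmt12 (m : GMetric X) (φ : X → ℝ≥0∞) (hφ : IsWeight m φ) :
    (FlatWeight m φ ↔
      ((⨅ x, φ x) = 0 ∧
        ∀ p q : X × ℝ≥0∞, (φ p.1 < p.2 ∧ p.2 < ∞) → (φ q.1 < q.2 ∧ q.2 < ∞) →
          ∃ z : X × ℝ≥0∞, (φ z.1 < z.2 ∧ z.2 < ∞) ∧ ballLE m p z ∧ ballLE m q z)) ∧
    (FlatWeight m φ ↔
      ∃ (ι : Type u) (le : ι → ι → Prop) (x : ι → X),
        ForwardCauchy m le x ∧ φ = fun y => ⨅ i, ⨆ j, ⨆ (_ : le i j), m.d y (x j)) := by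
  constructor
  · refine ⟨fun hf => ⟨hf.2.1, hf.upperBallsDirected⟩, fun ⟨hinf, hdir⟩ => ?_⟩
    obtain ⟨ι, le, x, hc, rfl⟩ := exists_forwardCauchy_of_upperBallsDirected hφ hinf hdir
    exact hc.flatWeight_netWeight
  · refine ⟨fun hf =>
      exists_forwardCauchy_of_upperBallsDirected hφ hf.2.1 hf.upperBallsDirected, ?_⟩
    rintro ⟨ι, le, x, hc, rfl⟩
    exact hc.flatWeight_netWeight
end

section
/- If {x_i} is a forward Cauchy net in a metric space (X,d) and φ = inf_i sup_{j≥i} d(−, x_j), then for every coweight ψ of (X,d), φ ⊗ ψ = inf_i sup_{j≥i} ψ(x_j). -/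
open ENNReal

universe u

variable {X : Type u}

/-! For every net, `ψ(x_j) ≤ ψ(y) + d(y, x_j)` gives `inf_i sup_{j≥i} ψ(x_j) ≤ φ(y) + ψ(y)`.
Conversely, forward Cauchyness makes `φ(x_k) ≤ ε` for all late enough `k`, and by directedness
such a `k` can be taken beyond any given `i`, so `φ ⊗ ψ ≤ φ(x_k) + ψ(x_k) ≤ ε + sup_{j≥i} ψ(x_j)`. -/

section NetLimsup

variable {ι : Type*} (le : ι → ι → Prop)

noncomputable def limsupNet (f : ι → ℝ≥0∞) : ℝ≥0∞ := ⨅ i, ⨆ j, ⨆ (_ : le i j), f j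

variable {le}

theorem limsupNet_mono {f g : ι → ℝ≥0∞} (hfg : ∀ j, f j ≤ g j) :
    limsupNet le f ≤ limsupNet le g :=
  iInf_mono fun _ => iSup₂_mono fun j _ => hfg j

theorem limsupNet_const_add_le (c : ℝ≥0∞) (f : ι → ℝ≥0∞) :
    limsupNet le (fun j => c + f j) ≤ c + limsupNet le f := by
  rw [limsupNet, limsupNet, ENNReal.add_iInf]
  exact iInf_mono fun i => iSup₂_le fun j hj => add_le_add_right (le_iSup₂_of_le j hj le_rfl) c

theorem limsupNet_le_of_le {f : ι → ℝ≥0∞} {i : ι} {c : ℝ≥0∞}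
    (hf : ∀ j, le i j → f j ≤ c) : limsupNet le f ≤ c :=
  iInf_le_of_le i (iSup₂_le hf)

end NetLimsup

section WeightOfNet

variable {ι : Type*} {m : GMetric X} {le : ι → ι → Prop} {x : ι → X}

theorem limsupNet_comp_le_tensor {ψ : X → ℝ≥0∞} (hψ : IsCoweight m ψ) :
    limsupNet le (fun j => ψ (x j))
      ≤ tensor (fun y => limsupNet le fun j => m.d y (x j)) ψ := by
  refine le_iInf fun y => ?_
  calc limsupNet le (fun j => ψ (x j))
      ≤ limsupNet le (fun j => ψ y + m.d y (x j)) := limsupNet_mono fun j => hψ y (x j)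
    _ ≤ ψ y + limsupNet le (fun j => m.d y (x j)) := limsupNet_const_add_le _ _
    _ = limsupNet le (fun j => m.d y (x j)) + ψ y := add_comm _ _

theorem ForwardCauchy.exists_forall_limsupNet_dist_le (hfc : ForwardCauchy m le x)
    {ε : ℝ≥0∞} (hε : 0 < ε) :
    ∃ i₀, ∀ k, le i₀ k → limsupNet le (fun j => m.d (x k) (x j)) ≤ ε := by
  obtain ⟨i₀, hi₀⟩ := iInf_lt_iff.mp (hfc.2 ▸ hε)
  refine ⟨i₀, fun k hk => limsupNet_le_of_le (i := k) fun j hkj => le_trans ?_ hi₀.le⟩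
  exact le_iSup₂_of_le k hk
    (le_iSup₂_of_le (f := fun j (_ : le k j) => m.d (x k) (x j)) j hkj le_rfl)

theorem ForwardCauchy.tensor_le_limsupNet (hfc : ForwardCauchy m le x) (ψ : X → ℝ≥0∞) :
    tensor (fun y => limsupNet le fun j => m.d y (x j)) ψ ≤ limsupNet le (fun j => ψ (x j)) := by
  refine le_iInf fun i => ENNReal.le_of_forall_pos_le_add fun ε hε _ => ?_
  obtain ⟨i₀, hi₀⟩ := hfc.exists_forall_limsupNet_dist_le (ENNReal.coe_pos.mpr hε)
  obtain ⟨k, hik, hi₀k⟩ := hfc.1.2.2.2 i i₀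
  calc tensor (fun y => limsupNet le fun j => m.d y (x j)) ψ
      ≤ limsupNet le (fun j => m.d (x k) (x j)) + ψ (x k) := iInf_le _ (x k)
    _ ≤ ε + ⨆ j, ⨆ (_ : le i j), ψ (x j) :=
        add_le_add (hi₀ k hi₀k)
          (le_iSup₂_of_le (f := fun j (_ : le i j) => ψ (x j)) k hik le_rfl)
    _ = (⨆ j, ⨆ (_ : le i j), ψ (x j)) + ε := add_comm _ _

end WeightOfNet

/-- For the weight generated by a forward Cauchy net, φ ⊗ ψ = inf_i sup_{j≥i} ψ(x_j)
for every coweight ψ. -/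
theorem stmt13 {ι : Type*} (m : GMetric X) (le : ι → ι → Prop) (x : ι → X)
    (hfc : ForwardCauchy m le x) (ψ : X → ℝ≥0∞) (hψ : IsCoweight m ψ) :
    tensor (fun y => ⨅ i, ⨆ j, ⨆ (_ : le i j), m.d y (x j)) ψ
      = ⨅ i, ⨆ j, ⨆ (_ : le i j), ψ (x j) :=
  le_antisymm (hfc.tensor_le_limsupNet ψ) (limsupNet_comp_le_tensor hψ)
end

section
/- For each metric space (X,d), the c-Scott topology (the topological coreflection of the Scott approach distance) is coarser than the generalized Scott topology: for every Scott weight φ, the set {y ∈ X | φ(y) > 0} is generalized Scott open. -/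
open ENNReal

universe u

variable {X : Type u}

/-! A Scott weight φ with φ a > 0 stays above some 2ε at a tail point x k₀ of any forward Cauchy
net with Yoneda limit a. Every y within ε of a later x j lies within 2ε of x k₀, and since a
weight is 1-Lipschitz from the left, φ y = 0 would force φ (x k₀) ≤ d (x k₀) y < 2ε. -/

theorem IsWeight.pos_of_dist_lt {m : GMetric X} {φ : X → ℝ≥0∞} (hφ : IsWeight m φ) {x y : X}
    (hxy : m.d x y < φ x) : 0 < φ y := by
  refine pos_iff_ne_zero.mpr fun hy => (hxy.trans_le ?_).false
  simpa [hy] using hφ x y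

theorem ForwardCauchy.exists_dist_lt {ι : Type*} {m : GMetric X} {le : ι → ι → Prop}
    {x : ι → X} (hx : ForwardCauchy m le x) {ε : ℝ≥0∞} (hε : 0 < ε) :
    ∃ i, ∀ j, le i j → ∀ k, le j k → m.d (x j) (x k) < ε := by
  obtain ⟨i, hi⟩ := iInf_lt_iff.mp (hx.2.symm ▸ hε)
  exact ⟨i, fun j hij k hjk =>
    (le_iSup₂_of_le j hij (le_iSup₂_of_le k hjk le_rfl : m.d (x j) (x k) ≤ _)).trans_lt hi⟩

theorem ScottWeight.exists_lt_of_lt {m : GMetric X} {φ : X → ℝ≥0∞} (hφ : ScottWeight m φ)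
    {ι : Type u} {le : ι → ι → Prop} {x : ι → X} {a : X} (hx : ForwardCauchy m le x)
    (ha : YonedaLimit m le x a) {r : ℝ≥0∞} (hr : r < φ a) (i : ι) :
    ∃ j, le i j ∧ r < φ (x j) := by
  have hr' : r < ⨆ j, ⨆ (_ : le i j), φ (x j) :=
    hr.trans_le ((hφ.2 ι le x a hx ha).trans (iInf_le _ i))
  simpa only [lt_iSup_iff, exists_prop] using hr'

theorem ENNReal.exists_pos_add_self_lt {c : ℝ≥0∞} (hc : 0 < c) : ∃ ε, 0 < ε ∧ ε + ε < c := by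
  obtain ⟨δ, hδ, hδc⟩ := exists_between hc
  exact ⟨δ / 2, ENNReal.half_pos hδ.ne', (ENNReal.add_halves δ).symm ▸ hδc⟩

/-- For every Scott weight φ, the set {y | φ(y) > 0} is generalized Scott open; hence the
c-Scott topology is coarser than the generalized Scott topology. -/
theorem stmt16 (m : GMetric X) (φ : X → ℝ≥0∞) (hφ : ScottWeight m φ) :
    ∀ (ι : Type u) (le : ι → ι → Prop) (x : ι → X) (a : X),
      ForwardCauchy m le x → YonedaLimit m le x a → 0 < φ a →
      ∃ ε : ℝ≥0∞, 0 < ε ∧ ∃ i, ∀ j, le i j → ∀ y, m.d (x j) y < ε → 0 < φ y := by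
  intro ι le x a hx hxa ha
  obtain ⟨ε, hε, hεa⟩ := ENNReal.exists_pos_add_self_lt ha
  obtain ⟨i, hi⟩ := hx.exists_dist_lt hε
  obtain ⟨k, hik, hk⟩ := hφ.exists_lt_of_lt hx hxa hεa i
  refine ⟨ε, hε, k, fun j hkj y hy => hφ.1.pos_of_dist_lt (x := x k) ?_⟩
  calc m.d (x k) y ≤ m.d (x k) (x j) + m.d (x j) y := m.triangle _ _ _
    _ < ε + ε := ENNReal.add_lt_add (hi k hik j hkj) hy
    _ < φ (x k) := hk
end
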